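/- Fix S, K, σ, r, τ > 0 and ρ ∈ (−1, 1), and let μ̃ ∈ ℝ. Define δ(α) = r − μ̃ + α√(1−ρ²)σ and let P^α(S) = K e^{−rτ} Φ(d₂(α)) − S e^{−δ(α)τ} Φ(d₁(α)) be the Black-Scholes put price with dividend yield δ(α), where d₂(α) = (ln(K/S) − (r − δ(α) − σ²/2)τ)/(σ√τ) and d₁(α) = (ln(K/S) − (r − δ(α) + σ²/2)τ)/(σ√τ). Then α ↦ P^α(S) is non-decreasing on [0, ∞). -/

import Mathlib

/-!
Write the put price as a function of the dividend yield `δ`. Differentiating in `δ`, the two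
Gaussian-density terms cancel because `K e^{-rτ} φ(d₂) = S e^{-δτ} φ(d₁)` (with `d₂ = d₁ + σ√τ`),
leaving `∂P/∂δ = S τ e^{-δτ} Φ(d₁) ≥ 0`. Since `δ(α)` is affine in `α` with slope
`√(1-ρ²) σ ≥ 0`, the price is monotone in `α`.
-/

noncomputable def stdNormalCDF (x : ℝ) : ℝ :=
  ∫ t in Set.Iic x, Real.exp (-t^2/2) / Real.sqrt (2*Real.pi)

open MeasureTheory Real

noncomputable section

def stdNormalPDF (x : ℝ) : ℝ := exp (-x ^ 2 / 2) / sqrt (2 * π)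

lemma integrable_stdNormalPDF : Integrable stdNormalPDF := by
  have h : stdNormalPDF = fun t => exp (-(1 / 2) * t ^ 2) * (sqrt (2 * π))⁻¹ := by
    funext t; rw [stdNormalPDF, div_eq_mul_inv]; ring_nf
  rw [h]
  exact (integrable_exp_neg_mul_sq (by norm_num)).mul_const _

lemma continuous_stdNormalPDF : Continuous stdNormalPDF := by
  unfold stdNormalPDF; fun_prop

lemma stdNormalPDF_add (x s : ℝ) :
    stdNormalPDF (x + s) = stdNormalPDF x * exp (-(s * x + s ^ 2 / 2)) := by
  rw [stdNormalPDF, stdNormalPDF, div_mul_eq_mul_div, ← exp_add]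
  ring_nf

lemma stdNormalCDF_nonneg (x : ℝ) : 0 ≤ stdNormalCDF x :=
  setIntegral_nonneg measurableSet_Iic fun t _ => by positivity

lemma hasDerivAt_stdNormalCDF (x : ℝ) : HasDerivAt stdNormalCDF (stdNormalPDF x) x := by
  have hsplit : ∀ y, stdNormalCDF y = stdNormalCDF 0 + ∫ t in (0 : ℝ)..y, stdNormalPDF t := by
    intro y
    rw [← intervalIntegral.integral_Iic_sub_Iic integrable_stdNormalPDF.integrableOn
      integrable_stdNormalPDF.integrableOn]
    exact (add_sub_cancel (stdNormalCDF 0) (stdNormalCDF y)).symm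
  have hFTC := (intervalIntegral.integral_hasDerivAt_right (a := 0) (b := x)
    integrable_stdNormalPDF.intervalIntegrable
    (continuous_stdNormalPDF.stronglyMeasurableAtFilter _ _)
    continuous_stdNormalPDF.continuousAt).const_add (stdNormalCDF 0)
  exact hFTC.congr_of_eventuallyEq (.of_forall hsplit)

/-- These are `-d₁` and `-d₂` of the usual Black–Scholes notation (the paper's sign convention),
so that the put price involves `Φ(d₂)` and `Φ(d₁)` rather than `Φ(-d₂)` and `Φ(-d₁)`. -/
def putD₁ (S K r σ τ δ : ℝ) : ℝ := (log (K / S) - (r - δ + σ ^ 2 / 2) * τ) / (σ * sqrt τ)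

def putD₂ (S K r σ τ δ : ℝ) : ℝ := (log (K / S) - (r - δ - σ ^ 2 / 2) * τ) / (σ * sqrt τ)

def putPrice (S K r σ τ δ : ℝ) : ℝ :=
  K * exp (-r * τ) * stdNormalCDF (putD₂ S K r σ τ δ)
    - S * exp (-δ * τ) * stdNormalCDF (putD₁ S K r σ τ δ)

section PutPrice

variable {S K r σ τ : ℝ}

lemma putD₂_eq_putD₁_add (hσ : σ ≠ 0) (hτ : 0 < τ) (δ : ℝ) :
    putD₂ S K r σ τ δ = putD₁ S K r σ τ δ + σ * sqrt τ := by
  have hsqrt : sqrt τ ^ 2 = τ := sq_sqrt hτ.le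
  have : sqrt τ ≠ 0 := (sqrt_pos.2 hτ).ne'
  rw [putD₂, putD₁]
  field_simp
  linear_combination (-2 * σ ^ 2) * hsqrt

lemma sigma_sqrt_mul_putD₁_add (hσ : σ ≠ 0) (hτ : 0 < τ) (δ : ℝ) :
    σ * sqrt τ * putD₁ S K r σ τ δ + (σ * sqrt τ) ^ 2 / 2 = log (K / S) - (r - δ) * τ := by
  have hsqrt : sqrt τ ^ 2 = τ := sq_sqrt hτ.le
  have : sqrt τ ≠ 0 := (sqrt_pos.2 hτ).ne'
  rw [putD₁, mul_div_cancel₀ _ (by positivity), mul_pow, hsqrt]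
  ring

lemma strike_mul_stdNormalPDF_putD₂ (hS : 0 < S) (hK : 0 < K) (hσ : σ ≠ 0) (hτ : 0 < τ)
    (δ : ℝ) : K * exp (-r * τ) * stdNormalPDF (putD₂ S K r σ τ δ)
      = S * exp (-δ * τ) * stdNormalPDF (putD₁ S K r σ τ δ) := by
  rw [putD₂_eq_putD₁_add hσ hτ, stdNormalPDF_add, sigma_sqrt_mul_putD₁_add hσ hτ,
    neg_sub, exp_sub, exp_log (div_pos hK hS)]
  field_simp
  rw [mul_right_comm, ← exp_add, mul_comm]
  ring_nf

lemma hasDerivAt_putD₁ (δ : ℝ) :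
    HasDerivAt (putD₁ S K r σ τ) (τ / (σ * sqrt τ)) δ := by
  have := (((((hasDerivAt_id δ).const_sub r).add_const (σ ^ 2 / 2)).mul_const τ).const_sub
    (log (K / S))).div_const (σ * sqrt τ)
  exact this.congr_deriv (by ring)

lemma hasDerivAt_putPrice (hS : 0 < S) (hK : 0 < K) (hσ : σ ≠ 0) (hτ : 0 < τ) (δ : ℝ) :
    HasDerivAt (putPrice S K r σ τ)
      (S * τ * exp (-δ * τ) * stdNormalCDF (putD₁ S K r σ τ δ)) δ := by
  have hd₁ : HasDerivAt (putD₁ S K r σ τ) (τ / (σ * sqrt τ)) δ := hasDerivAt_putD₁ δ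
  have hd₂ : HasDerivAt (putD₂ S K r σ τ) (τ / (σ * sqrt τ)) δ := by
    rw [show putD₂ S K r σ τ = fun δ => putD₁ S K r σ τ δ + σ * sqrt τ from
      funext (putD₂_eq_putD₁_add hσ hτ)]
    exact hd₁.add_const _
  have hexp : HasDerivAt (fun δ => exp (-δ * τ)) (exp (-δ * τ) * (-1 * τ)) δ :=
    ((hasDerivAt_id δ).neg.mul_const τ).exp
  have hP := (((hasDerivAt_stdNormalCDF _).comp δ hd₂).const_mul (K * exp (-r * τ))).sub
    ((hexp.const_mul S).mul ((hasDerivAt_stdNormalCDF _).comp δ hd₁))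
  simp only [Function.comp_apply] at hP
  refine hP.congr_deriv ?_
  linear_combination (τ / (σ * sqrt τ)) * strike_mul_stdNormalPDF_putD₂ hS hK hσ hτ δ

lemma monotone_putPrice (hS : 0 < S) (hK : 0 < K) (hσ : σ ≠ 0) (hτ : 0 < τ) :
    Monotone (putPrice S K r σ τ) := by
  refine monotone_of_deriv_nonneg
    (fun δ => (hasDerivAt_putPrice hS hK hσ hτ δ).differentiableAt) fun δ => ?_
  rw [(hasDerivAt_putPrice hS hK hσ hτ δ).deriv]
  have := stdNormalCDF_nonneg (putD₁ S K r σ τ δ)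
  positivity

end PutPrice

end

theorem stmt5_general (S K σ r τ ρ μt : ℝ) (hS : 0 < S) (hK : 0 < K) (hσ : 0 < σ)
    (hτ : 0 < τ) :
    MonotoneOn (fun α : ℝ =>
      K * Real.exp (-r*τ) *
        stdNormalCDF ((Real.log (K/S)
          - (r - (r - μt + α * Real.sqrt (1 - ρ^2) * σ) - σ^2/2)*τ)/(σ*Real.sqrt τ))
      - S * Real.exp (-(r - μt + α * Real.sqrt (1 - ρ^2) * σ)*τ) *
        stdNormalCDF ((Real.log (K/S)
          - (r - (r - μt + α * Real.sqrt (1 - ρ^2) * σ) + σ^2/2)*τ)/(σ*Real.sqrt τ)))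
      (Set.Ici 0) := by
  have hδ : Monotone fun α : ℝ => r - μt + α * sqrt (1 - ρ ^ 2) * σ :=
    fun a b hab => by dsimp only; gcongr
  exact ((monotone_putPrice hS hK hσ.ne' hτ).comp hδ).monotoneOn _

/-- The seller's put price is non-decreasing in the instantaneous Sharpe ratio `α`. -/
theorem stmt5 (S K σ r τ ρ μt : ℝ) (hS : 0 < S) (hK : 0 < K) (hσ : 0 < σ) (hr : 0 < r)
    (hτ : 0 < τ) (hρ : ρ ∈ Set.Ioo (-1 : ℝ) 1) :
    MonotoneOn (fun α : ℝ =>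
      K * Real.exp (-r*τ) *
        stdNormalCDF ((Real.log (K/S)
          - (r - (r - μt + α * Real.sqrt (1 - ρ^2) * σ) - σ^2/2)*τ)/(σ*Real.sqrt τ))
      - S * Real.exp (-(r - μt + α * Real.sqrt (1 - ρ^2) * σ)*τ) *
        stdNormalCDF ((Real.log (K/S)
          - (r - (r - μt + α * Real.sqrt (1 - ρ^2) * σ) + σ^2/2)*τ)/(σ*Real.sqrt τ)))
      (Set.Ici 0) :=
  stmt5_general S K σ r τ ρ μt hS hK hσ hτ
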